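/- Let k, ℓ ≥ 3 be integers and let π = π₁π₂…πₙ be a (k,ℓ)-crucial permutation of length n. Let A be the set of values π_{n+1−a} over all integers a ≥ 1 with (k−1)a ≤ n such that π_{n+1−(k−1)a} < π_{n+1−(k−2)a} < … < π_{n+1−a}, and let B be the set of values π_{n+1−b} over all integers b ≥ 1 with (ℓ−1)b ≤ n such that π_{n+1−(ℓ−1)b} > π_{n+1−(ℓ−2)b} > … > π_{n+1−b}. Then A and B are nonempty and min A < max B. -/

import Mathlib

/-- `π` (viewed as a 1-indexed function `ℕ → ℕ`) is a permutation of length `n`,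
i.e. the values `π 1, π 2, …, π n` contain each of `1,…,n` exactly once. -/
def IsPermutation (n : ℕ) (π : ℕ → ℕ) : Prop :=
  (∀ i, 1 ≤ i → i ≤ n → 1 ≤ π i ∧ π i ≤ n) ∧
  (∀ i j, 1 ≤ i → i ≤ n → 1 ≤ j → j ≤ n → π i = π j → i = j) ∧
  (∀ v, 1 ≤ v → v ≤ n → ∃ i, 1 ≤ i ∧ i ≤ n ∧ π i = v)

/-- `π` (of length `n`) has a strictly increasing arithmetic subsequence of length `k`,
i.e. an arithmetic occurrence of the pattern `1 2 … k`. -/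
def HasArithInc (n k : ℕ) (π : ℕ → ℕ) : Prop :=
  ∃ i d : ℕ, 1 ≤ i ∧ 1 ≤ d ∧ i + (k - 1) * d ≤ n ∧
    ∀ j, j + 1 < k → π (i + j * d) < π (i + (j + 1) * d)

/-- `π` (of length `n`) has a strictly decreasing arithmetic subsequence of length `k`,
i.e. an arithmetic occurrence of the pattern `k (k-1) … 1`. -/
def HasArithDec (n k : ℕ) (π : ℕ → ℕ) : Prop :=
  ∃ i d : ℕ, 1 ≤ i ∧ 1 ≤ d ∧ i + (k - 1) * d ≤ n ∧
    ∀ j, j + 1 < k → π (i + j * d) > π (i + (j + 1) * d)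

/-- `π` (of length `n`) is `(k,l)`-anti-monotone: it avoids arithmetically
the patterns `1 2 … k` and `l (l-1) … 1`. -/
def AntiMonotone (n k l : ℕ) (π : ℕ → ℕ) : Prop :=
  ¬ HasArithInc n k π ∧ ¬ HasArithDec n l π

/-- The extension of `π` (of length `n`) to the right by `x`: every entry `≥ x` is
increased by `1` and `x` is appended at the right end (position `n+1`). -/
def ExtendRight (n : ℕ) (π : ℕ → ℕ) (x : ℕ) : ℕ → ℕ :=
  fun i => if i = n + 1 then x else if x ≤ π i then π i + 1 else π i

/-- The extension of `π` to the left by `x`: every entry `≥ x` is increased by `1`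
and `x` is prepended at the left end (position `1`). -/
def ExtendLeft (π : ℕ → ℕ) (x : ℕ) : ℕ → ℕ :=
  fun i => if i = 1 then x else if x ≤ π (i - 1) then π (i - 1) + 1 else π (i - 1)

/-- `π` is a `(k,l)`-crucial permutation of length `n`. -/
def Crucial (n k l : ℕ) (π : ℕ → ℕ) : Prop :=
  IsPermutation n π ∧ AntiMonotone n k l π ∧
  ∀ x, 1 ≤ x → x ≤ n + 1 → ¬ AntiMonotone (n + 1) k l (ExtendRight n π x)

/-- `π` is a `(k,l)`-bicrucial permutation of length `n`. -/
def Bicrucial (n k l : ℕ) (π : ℕ → ℕ) : Prop :=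
  Crucial n k l π ∧
  ∀ x, 1 ≤ x → x ≤ n + 1 → ¬ AntiMonotone (n + 1) k l (ExtendLeft π x)


/-!
Extending `π` on the right by `x` keeps the relative order of the old entries, so a forbidden
arithmetic pattern in the extension must use the new last entry `x`. Read backwards from
position `n + 1`, an increasing one puts a value of `A` below `x` and a decreasing one puts a
value of `B` at or above `x`. Taking `x = n + 1` and `x = 1` shows that `A` and `B` are nonempty;
taking `x = min A` gives a value of `B` that is `≥ min A`. Equality is impossible: by injectivity
it would be one entry `π (n + 1 - a)`, and `π (n + 1 - 2a)` would lie both below and above it.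
-/

/-- `HasArithInc` and `HasArithDec` are the instances `r = (· < ·)` and `r = (· > ·)`. -/
def HasArithChain (r : ℕ → ℕ → Prop) (n k : ℕ) (π : ℕ → ℕ) : Prop :=
  ∃ i d : ℕ, 1 ≤ i ∧ 1 ≤ d ∧ i + (k - 1) * d ≤ n ∧
    ∀ j, j + 1 < k → r (π (i + j * d)) (π (i + (j + 1) * d))

/-- For `r = (· < ·)` and `r = (· > ·)` these are the sets `A` and `B` of the theorem. -/
def chainEndValues (r : ℕ → ℕ → Prop) (n k : ℕ) (π : ℕ → ℕ) : Set ℕ :=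
  {v | ∃ a, 1 ≤ a ∧ (k - 1) * a ≤ n ∧
    (∀ j, 1 ≤ j → j + 1 < k → r (π (n + 1 - (j + 1) * a)) (π (n + 1 - j * a))) ∧
    v = π (n + 1 - a)}

section ExtendRight

variable {n : ℕ} {π : ℕ → ℕ} {x p q : ℕ}

theorem ExtendRight_last : ExtendRight n π x (n + 1) = x := by
  simp [ExtendRight]

theorem ExtendRight_of_le (hp : p ≤ n) :
    ExtendRight n π x p = if x ≤ π p then π p + 1 else π p := by
  simp only [ExtendRight, if_neg (show p ≠ n + 1 by omega)]

theorem ExtendRight_lt_ExtendRight_iff (hp : p ≤ n) (hq : q ≤ n) :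
    ExtendRight n π x p < ExtendRight n π x q ↔ π p < π q := by
  rw [ExtendRight_of_le hp, ExtendRight_of_le hq]
  split_ifs <;> omega

theorem ExtendRight_lt_iff (hp : p ≤ n) : ExtendRight n π x p < x ↔ π p < x := by
  rw [ExtendRight_of_le hp]
  split_ifs <;> omega

theorem lt_ExtendRight_iff (hp : p ≤ n) : x < ExtendRight n π x p ↔ x ≤ π p := by
  rw [ExtendRight_of_le hp]
  split_ifs <;> omega

end ExtendRight

section Chains

variable {r : ℕ → ℕ → Prop} {n k : ℕ} {f g : ℕ → ℕ}

theorem HasArithChain.of_rel_iff (hfg : ∀ p q, p ≤ n → q ≤ n → (r (g p) (g q) ↔ r (f p) (f q)))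
    (hg : HasArithChain r n k g) : HasArithChain r n k f := by
  obtain ⟨i, d, hi, hd, hend, hchain⟩ := hg
  refine ⟨i, d, hi, hd, hend, fun j hj => ?_⟩
  have hj₁ : (j + 1) * d ≤ (k - 1) * d := Nat.mul_le_mul_right d (by omega)
  have hj₀ : j * d ≤ (j + 1) * d := Nat.mul_le_mul_right d (by omega)
  exact (hfg _ _ (by omega) (by omega)).mp (hchain j hj)

theorem add_sub_mul_eq_of_add_mul_eq {i d m : ℕ} (hend : i + (k - 1) * d = n + 1)
    (hm : m ≤ k - 1) : i + (k - 1 - m) * d = n + 1 - m * d := by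
  have : (k - 1 - m) * d + m * d = (k - 1) * d := by rw [← add_mul, Nat.sub_add_cancel hm]
  omega

theorem rel_sub_mul_of_chain_ending_at {i d : ℕ}
    (hchain : ∀ j, j + 1 < k → r (g (i + j * d)) (g (i + (j + 1) * d)))
    (hend : i + (k - 1) * d = n + 1) :
    ∀ j, j + 1 < k → r (g (n + 1 - (j + 1) * d)) (g (n + 1 - j * d)) := by
  intro j hj
  have h := hchain (k - 1 - (j + 1)) (by omega)
  rwa [show k - 1 - (j + 1) + 1 = k - 1 - j by omega, add_sub_mul_eq_of_add_mul_eq hend (by omega),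
    add_sub_mul_eq_of_add_mul_eq hend (by omega)] at h

theorem exists_mem_chainEndValues_of_hasArithChain_succ (hk : 2 ≤ k)
    (hfg : ∀ p q, p ≤ n → q ≤ n → (r (g p) (g q) ↔ r (f p) (f q)))
    (hf : ¬ HasArithChain r n k f) (hg : HasArithChain r (n + 1) k g) :
    ∃ a, 1 ≤ a ∧ f (n + 1 - a) ∈ chainEndValues r n k f ∧ r (g (n + 1 - a)) (g (n + 1)) := by
  obtain ⟨i, d, hi, hd, hle, hchain⟩ := hg
  have hend : i + (k - 1) * d = n + 1 := by
    by_contra hne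
    exact hf (HasArithChain.of_rel_iff hfg ⟨i, d, hi, hd, by omega, hchain⟩)
  have hback := rel_sub_mul_of_chain_ending_at hchain hend
  have hlast := hback 0 (by omega)
  simp only [zero_add, one_mul, zero_mul, Nat.sub_zero] at hlast
  refine ⟨d, hd, ⟨d, hd, by omega, fun j hj₁ hj => ?_, rfl⟩, hlast⟩
  have : 0 < j * d := Nat.mul_pos (by omega) hd
  have : j * d ≤ (j + 1) * d := Nat.mul_le_mul_right d (by omega)
  exact (hfg _ _ (by omega) (by omega)).mp (hback j hj)

end Chains

section Permutation

variable {n k l : ℕ} {π : ℕ → ℕ}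

theorem IsPermutation.mem_chainEndValues_bounds {r : ℕ → ℕ → Prop} {v : ℕ}
    (hπ : IsPermutation n π) (hk : 2 ≤ k) (hv : v ∈ chainEndValues r n k π) : 1 ≤ v ∧ v ≤ n := by
  obtain ⟨a, ha, hlen, -, rfl⟩ := hv
  have : a ≤ (k - 1) * a := Nat.le_mul_of_pos_left a (by omega)
  exact hπ.1 _ (by omega) (by omega)

theorem IsPermutation.disjoint_chainEndValues (hπ : IsPermutation n π) (hk : 3 ≤ k) (hl : 3 ≤ l) :
    Disjoint (chainEndValues (· < ·) n k π) (chainEndValues (· > ·) n l π) := by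
  refine Set.disjoint_left.mpr fun v hvA hvB => ?_
  obtain ⟨a, ha, hlena, hinc, rfl⟩ := hvA
  obtain ⟨b, hb, hlenb, hdec, hab⟩ := hvB
  have : a ≤ (k - 1) * a := Nat.le_mul_of_pos_left a (by omega)
  have : b ≤ (l - 1) * b := Nat.le_mul_of_pos_left b (by omega)
  obtain rfl : a = b := by
    have := hπ.2.1 _ _ (by omega) (by omega) (by omega) (by omega) hab
    omega
  exact lt_asymm (hinc 1 le_rfl (by omega)) (hdec 1 le_rfl (by omega))

theorem Crucial.exists_lt_or_exists_ge (h : Crucial n k l π) (hk : 2 ≤ k) (hl : 2 ≤ l)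
    {x : ℕ} (hx₁ : 1 ≤ x) (hx : x ≤ n + 1) :
    (∃ v ∈ chainEndValues (· < ·) n k π, v < x) ∨
      (∃ v ∈ chainEndValues (· > ·) n l π, x ≤ v) := by
  obtain ⟨-, ⟨hinc, hdec⟩, hext⟩ := h
  have hcmp : ∀ p q, p ≤ n → q ≤ n →
      (ExtendRight n π x p < ExtendRight n π x q ↔ π p < π q) :=
    fun _ _ => ExtendRight_lt_ExtendRight_iff
  rcases not_and_or.mp (hext x hx₁ hx) with hinc' | hdec'
  · obtain ⟨a, ha, hmem, hlt⟩ := exists_mem_chainEndValues_of_hasArithChain_succ hk hcmp hinc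
      (not_not.mp hinc')
    rw [ExtendRight_last, ExtendRight_lt_iff (by omega)] at hlt
    exact .inl ⟨_, hmem, hlt⟩
  · obtain ⟨b, hb, hmem, hgt⟩ := exists_mem_chainEndValues_of_hasArithChain_succ hl
      (fun p q hp hq => hcmp q p hq hp) hdec (not_not.mp hdec')
    rw [ExtendRight_last, gt_iff_lt, lt_ExtendRight_iff (by omega)] at hgt
    exact .inr ⟨_, hmem, hgt⟩

end Permutation

/-- For a `(k,l)`-crucial permutation `π` of length `n`: the set `A` of final values
of increasing arithmetic subsequences of length `k-1` ending at the last position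
and the set `B` of final values of decreasing arithmetic subsequences of length
`l-1` ending at the last position are nonempty, and `min A < max B`. -/
theorem crucial_min_lt_max (k l n : ℕ) (hk : 3 ≤ k) (hl : 3 ≤ l) (π : ℕ → ℕ)
    (h : Crucial n k l π)
    (A B : Set ℕ)
    (hA : A = {v | ∃ a, 1 ≤ a ∧ (k - 1) * a ≤ n ∧
      (∀ j, 1 ≤ j → j + 1 < k → π (n + 1 - (j + 1) * a) < π (n + 1 - j * a)) ∧
      v = π (n + 1 - a)})
    (hB : B = {v | ∃ b, 1 ≤ b ∧ (l - 1) * b ≤ n ∧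
      (∀ j, 1 ≤ j → j + 1 < l → π (n + 1 - (j + 1) * b) > π (n + 1 - j * b)) ∧
      v = π (n + 1 - b)}) :
    A.Nonempty ∧ B.Nonempty ∧ sInf A < sSup B := by
  change A = chainEndValues (· < ·) n k π at hA
  change B = chainEndValues (· > ·) n l π at hB
  subst hA hB
  have hAbound : ∀ v ∈ chainEndValues (· < ·) n k π, 1 ≤ v ∧ v ≤ n :=
    fun _ => h.1.mem_chainEndValues_bounds (by omega)
  have hBbound : ∀ v ∈ chainEndValues (· > ·) n l π, 1 ≤ v ∧ v ≤ n :=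
    fun _ => h.1.mem_chainEndValues_bounds (by omega)
  have key := fun x => h.exists_lt_or_exists_ge (x := x) (by omega) (by omega)
  have hAne : (chainEndValues (· < ·) n k π).Nonempty := by
    rcases key (n + 1) (by omega) le_rfl with ⟨v, hv, -⟩ | ⟨v, hv, hge⟩
    · exact ⟨v, hv⟩
    · exact absurd (hBbound v hv).2 (by omega)
  have hBne : (chainEndValues (· > ·) n l π).Nonempty := by
    rcases key 1 le_rfl (by omega) with ⟨v, hv, hlt⟩ | ⟨v, hv, -⟩
    · exact absurd (hAbound v hv).1 (by omega)
    · exact ⟨v, hv⟩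
  refine ⟨hAne, hBne, not_le.mp fun hle => ?_⟩
  have hmin := Nat.sInf_mem hAne
  rcases key _ (hAbound _ hmin).1 (by have := (hAbound _ hmin).2; omega) with
    ⟨v, hv, hlt⟩ | ⟨v, hv, hge⟩
  · exact absurd (Nat.sInf_le hv) (by omega)
  · have : v ≤ sSup _ := le_csSup ⟨n, fun w hw => (hBbound w hw).2⟩ hv
    obtain rfl : v = sInf (chainEndValues (· < ·) n k π) := by omega
    exact Set.disjoint_left.mp (h.1.disjoint_chainEndValues hk hl) hmin hv
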